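/- Let U be a slice-open subset of ℍ and q ∈ U. Then there exists a real-connected slice-domain V with q ∈ V ⊆ U, where real-connected means V ∩ ℝ is connected (possibly empty) in ℝ. -/

import Mathlib

noncomputable section

abbrev Hq := Quaternion ℝ

/-- The sphere of imaginary units of the quaternions. -/
def SphereS : Set Hq := {q | q ^ 2 = -1}

/-- The identification of `ℂ` with the slice plane `ℂ_I = ℝ + ℝI`. -/
def sliceEmb (I : Hq) : ℂ → Hq := fun z => (z.re : Hq) + (z.im : Hq) * I

/-- The slice complex plane `ℂ_I = ℝ + ℝI`. -/
def sliceC (I : Hq) : Set Hq := Set.range (sliceEmb I)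

/-- The slice-topology on the quaternions: the quotient topology induced by the
canonical map from the disjoint union of the slices, i.e. the supremum of the
topologies coinduced by the parametrizations of the slices. -/
def sliceTopology : TopologicalSpace Hq :=
  ⨆ I ∈ SphereS, TopologicalSpace.coinduced (sliceEmb I) inferInstance

/-- The real line inside the quaternions. -/
def realLine : Set Hq := Set.range (fun x : ℝ => (x : Hq))

/-- `g : ℂ → ℍ` (thought of as a function on the slice `ℂ_I`) is (left) holomorphic on
`U`: real differentiable with `∂ₓ g + I ∂_y g = 0`. -/
def SliceHolomorphicOn (I : Hq) (g : ℂ → Hq) (U : Set ℂ) : Prop :=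
  ∀ z ∈ U, ∃ L : ℂ →L[ℝ] Hq, HasFDerivAt g L z ∧ L 1 + I * L Complex.I = 0

/-- A function on a slice-open set is slice regular if it is holomorphic on each slice. -/
def SliceRegular (f : Hq → Hq) (Ω : Set Hq) : Prop :=
  ∀ I ∈ SphereS, SliceHolomorphicOn I (f ∘ sliceEmb I) (sliceEmb I ⁻¹' Ω)

/-- `K(m)` for `K ∈ 𝕊^N` (with `K 0 = 1` by convention) and `1 ≤ m ≤ 2^N`:
`∏_{i=N}^{1} (K_i K_{i-1})^{m_i}` where `(m_N … m_1)₂` is the binary expansion of `m-1`. -/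
def zetaTerm (K : ℕ → Hq) (N m : ℕ) : Hq :=
  ((List.range N).reverse.map
    (fun j => (K (j + 1) * K j) ^ (if Nat.testBit (m - 1) j then 1 else 0))).prod

/-- The matrix `σ_N` (0-indexed): entry `(i,j)` is `(-1)^{N+(j+1)}` if
`(i+1)+(j+1) = 2^N + 1`, and `0` otherwise. -/
def sigmaMat (N : ℕ) : Matrix (Fin (2 ^ N)) (Fin (2 ^ N)) ℝ :=
  Matrix.of fun i j =>
    if (i : ℕ) + (j : ℕ) = 2 ^ N - 1 then (-1 : ℝ) ^ (N + (j : ℕ) + 1) else 0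

def QOrth (I J : Hq) : Prop := (I * star J).re = 0

/-!
The slice topology is the quotient topology of a disjoint union of copies of `ℂ`, hence locally
connected, so connected components of slice-open sets are slice-open. Every slice meets `ℝ` in
its real axis, so closed subsets of `ℝ` are slice-closed. Hence removing from `U` the real points
outside the component `D` of `U ∩ ℝ` through `q` (all real points if `q` is not real) leaves a
slice-open set, and the component `V` of `q` in it is a slice domain. Its real trace lies in `D`
by construction and contains `D` because `D` is connected, so it is `D` (resp. empty).
-/

open Set Topology

lemma isOpen_sliceTopology_iff {V : Set Hq} :
    IsOpen[sliceTopology] V ↔ ∀ I ∈ SphereS, IsOpen (sliceEmb I ⁻¹' V) := by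
  rw [sliceTopology]
  simp only [isOpen_iSup_iff, isOpen_coinduced]

lemma continuous_sliceEmb {I : Hq} (hI : I ∈ SphereS) :
    Continuous[_, sliceTopology] (sliceEmb I) :=
  continuous_def.2 fun _ hV ↦ isOpen_sliceTopology_iff.1 hV I hI

lemma locallyConnectedSpace_sliceTopology : @LocallyConnectedSpace Hq sliceTopology := by
  let _ := sliceTopology
  refine locallyConnectedSpace_iff_connectedComponentIn_open.2 fun F hF p _ ↦
    isOpen_sliceTopology_iff.2 fun I hI ↦ ?_
  rw [(continuous_sliceEmb hI).continuousOn.preimage_connectedComponentIn]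
  exact isOpen_biUnion fun z _ ↦ (isOpen_sliceTopology_iff.1 hF I hI).connectedComponentIn

lemma sphereS_nonempty : SphereS.Nonempty := by
  refine ⟨⟨0, 1, 0, 0⟩, ?_⟩
  show (⟨0, 1, 0, 0⟩ : Hq) ^ 2 = -1
  refine (sq _).trans ?_
  ext <;> simp

lemma coe_notMem_sphereS (r : ℝ) : (r : Hq) ∉ SphereS := by
  intro h
  have := congrArg QuaternionAlgebra.re h
  simp only [← Quaternion.coe_pow, Quaternion.re_coe, Quaternion.re_neg, Quaternion.re_one] at this
  nlinarith [sq_nonneg r]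

lemma sliceEmb_ofReal (I : Hq) (y : ℝ) : sliceEmb I y = y := by
  simp [sliceEmb]

lemma sliceEmb_eq_coe_iff {I : Hq} (hI : I ∈ SphereS) {z : ℂ} {y : ℝ} :
    sliceEmb I z = y ↔ z = y := by
  refine ⟨fun h ↦ ?_, by rintro rfl; exact sliceEmb_ofReal I y⟩
  have him : z.im = 0 := by
    by_contra hz
    have hIz : (z.im : Hq) * I = ((y - z.re : ℝ) : Hq) := by
      rw [Quaternion.coe_sub, ← h, sliceEmb]
      abel
    apply coe_notMem_sphereS ((y - z.re) / z.im)
    rwa [div_eq_inv_mul, Quaternion.coe_mul, ← hIz, ← mul_assoc, ← Quaternion.coe_mul,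
      inv_mul_cancel₀ hz, Quaternion.coe_one, one_mul]
  have hre : (z.re : Hq) = y := by simpa [sliceEmb, him] using h
  exact Complex.ext (by simpa using Quaternion.coe_injective hre) (by simpa using him)

lemma continuous_coe_sliceTopology : Continuous[_, sliceTopology] ((↑) : ℝ → Hq) := by
  let _ := sliceTopology
  obtain ⟨I, hI⟩ := sphereS_nonempty
  have hcoe : ((↑) : ℝ → Hq) = sliceEmb I ∘ (↑) := funext fun y ↦ (sliceEmb_ofReal I y).symm
  rw [hcoe]
  exact (continuous_sliceEmb hI).comp Complex.continuous_ofReal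

lemma isClosed_image_coe_sliceTopology {F : Set ℝ} (hF : IsClosed F) :
    IsClosed[sliceTopology] (((↑) : ℝ → Hq) '' F) := by
  let _ := sliceTopology
  refine isOpen_compl_iff.1 (isOpen_sliceTopology_iff.2 fun I hI ↦ ?_)
  have hpre : sliceEmb I ⁻¹' (((↑) : ℝ → Hq) '' F) = ((↑) : ℝ → ℂ) '' F := by
    ext z
    simp only [mem_preimage, mem_image]
    exact exists_congr fun y ↦ and_congr_right fun _ ↦ by
      rw [eq_comm, sliceEmb_eq_coe_iff hI, eq_comm]
  rw [preimage_compl, hpre]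
  exact (Complex.isometry_ofReal.isClosedEmbedding.isClosedMap F hF).isOpen_compl

lemma preimage_coe_connectedComponentIn_diff_image_compl {U : Set Hq} {D : Set ℝ}
    (hD : IsPreconnected D) (hDU : D ⊆ (↑) ⁻¹' U) {x : ℝ} (hx : x ∈ D) :
    (↑) ⁻¹' @connectedComponentIn Hq sliceTopology (U \ (↑) '' Dᶜ) x = D := by
  let _ := sliceTopology
  refine subset_antisymm (fun y hy ↦ ?_) fun y hy ↦ ?_
  · by_contra hyD
    exact (connectedComponentIn_subset _ _ hy).2 ⟨y, hyD, rfl⟩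
  · have hDU' : (↑) '' D ⊆ U \ (↑) '' Dᶜ := by
      rintro _ ⟨y, hy, rfl⟩
      exact ⟨hDU hy, fun ⟨y', hy', he⟩ ↦ hy' (Quaternion.coe_injective he ▸ hy)⟩
    exact (hD.image _ continuous_coe_sliceTopology.continuousOn).subset_connectedComponentIn
      (mem_image_of_mem _ hx) hDU' (mem_image_of_mem _ hy)

/-- Every point of a slice-open set has a real-connected slice-domain neighbourhood
inside the set. -/
theorem exists_realConnected_sliceDomain (U : Set Hq)
    (hU : @IsOpen Hq sliceTopology U) (q : Hq) (hq : q ∈ U) :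
    ∃ V : Set Hq, q ∈ V ∧ V ⊆ U ∧ @IsOpen Hq sliceTopology V ∧
      @IsPreconnected Hq sliceTopology V ∧
      IsPreconnected ((fun x : ℝ => (x : Hq)) ⁻¹' V) := by
  let _ := sliceTopology
  have _ := locallyConnectedSpace_sliceTopology
  suffices ∃ D : Set ℝ, IsOpen D ∧ q ∉ ((↑) : ℝ → Hq) '' Dᶜ ∧
      IsPreconnected ((↑) ⁻¹' connectedComponentIn (U \ (↑) '' Dᶜ) q : Set ℝ) by
    obtain ⟨D, hD, hqD, htrace⟩ := this
    have hU' : IsOpen (U \ (↑) '' Dᶜ) :=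
      hU.sdiff (isClosed_image_coe_sliceTopology hD.isClosed_compl)
    exact ⟨_, mem_connectedComponentIn (show q ∈ U \ _ from ⟨hq, hqD⟩),
      (connectedComponentIn_subset _ _).trans sdiff_subset, hU'.connectedComponentIn,
      isPreconnected_connectedComponentIn, htrace⟩
  by_cases hreal : q ∈ range ((↑) : ℝ → Hq)
  · obtain ⟨x, rfl⟩ := hreal
    have hx : x ∈ (↑) ⁻¹' U := hq
    refine ⟨connectedComponentIn ((↑) ⁻¹' U) x,
      (hU.preimage continuous_coe_sliceTopology).connectedComponentIn, ?_, ?_⟩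
    · rintro ⟨y, hy, hyx⟩
      obtain rfl := Quaternion.coe_injective hyx
      exact hy (mem_connectedComponentIn hx)
    · rw [preimage_coe_connectedComponentIn_diff_image_compl isPreconnected_connectedComponentIn
        (connectedComponentIn_subset _ _) (mem_connectedComponentIn hx)]
      exact isPreconnected_connectedComponentIn
  · refine ⟨∅, isOpen_empty, by simpa using hreal, ?_⟩
    convert isPreconnected_empty
    exact eq_empty_of_forall_notMem fun y hy ↦
      (connectedComponentIn_subset _ _ hy).2 ⟨y, notMem_empty y, rfl⟩
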